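/- Let (H, B) be a cocommutative Rota-Baxter Hopf algebra with descendent product g∘_B h := g₍₁₎·B(g₍₂₎)·h·S(B(g₍₃₎)). Then B is multiplicative from (H, ∘_B) to (H, ·): B(g∘_B h) = B(g)·B(h) for all g,h ∈ H; moreover B is also a Rota-Baxter operator on the Hopf algebra H_B = (H, ∘_B, 1, Δ, ε, T). -/

import Mathlib

open scoped TensorProduct
open Coalgebra

variable (R H : Type*) [CommRing R] [AddCommGroup H] [Module R H] [Coalgebra R H]

/-- A Hopf algebra structure (multiplication, unit, antipode) on the coalgebra `H`:
the multiplication is associative with unit, comultiplication and counit are algebra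
maps, and `S` is an antipode (expressed via arbitrary Sweedler representations). -/
structure HopfMul where
  mul : H →ₗ[R] H →ₗ[R] H
  one : H
  S : H →ₗ[R] H
  mul_assoc : ∀ a b c : H, mul (mul a b) c = mul a (mul b c)
  one_mul : ∀ a : H, mul one a = a
  mul_one : ∀ a : H, mul a one = a
  comul_mul : ∀ (a b : H) {ιa : Type*} (ra : Coalgebra.Repr R a ιa) {ιb : Type*} (rb : Coalgebra.Repr R b ιb),
    comul (R := R) (mul a b) = ∑ i ∈ ra.index, ∑ j ∈ rb.index,
      mul (ra.left i) (rb.left j) ⊗ₜ[R] mul (ra.right i) (rb.right j)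
  comul_one : comul (R := R) one = one ⊗ₜ[R] one
  counit_mul : ∀ a b : H, counit (R := R) (mul a b) = counit (R := R) a * counit (R := R) b
  counit_one : counit (R := R) one = 1
  S_mul_left : ∀ (a : H) {ι : Type*} (r : Coalgebra.Repr R a ι),
    ∑ i ∈ r.index, mul (S (r.left i)) (r.right i) = counit (R := R) a • one
  S_mul_right : ∀ (a : H) {ι : Type*} (r : Coalgebra.Repr R a ι),
    ∑ i ∈ r.index, mul (r.left i) (S (r.right i)) = counit (R := R) a • one

/-- Cocommutativity of the coalgebra `H`. -/
def Cocomm : Prop :=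
  ∀ a : H, TensorProduct.comm R H H (comul (R := R) a) = comul (R := R) a

/-- A Rota-Baxter operator on the (cocommutative) Hopf algebra `(H, h)`: a coalgebra
homomorphism `B` satisfying `B(a)B(b) = B(a₍₁₎·B(a₍₂₎)·b·S(B(a₍₃₎)))`. -/
structure RotaBaxter (h : HopfMul R H) where
  B : H →ₗ[R] H
  comul_B : ∀ (a : H) {ι : Type*} (r : Coalgebra.Repr R a ι),
    comul (R := R) (B a) = ∑ i ∈ r.index, B (r.left i) ⊗ₜ[R] B (r.right i)
  counit_B : ∀ a : H, counit (R := R) (B a) = counit (R := R) a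
  rb : ∀ (a b : H) {ι : Type*} (r : Coalgebra.Repr R a ι)
      {ι2 : ι → Type*} (r2 : ∀ i : ι, Coalgebra.Repr R (r.right i) (ι2 i)),
    h.mul (B a) (B b) = ∑ i ∈ r.index, ∑ j ∈ (r2 i).index,
      B (h.mul (h.mul (h.mul (r.left i) (B ((r2 i).left j))) b)
        (h.S (B ((r2 i).right j))))

/-!
By the Rota–Baxter identity, `B(g)·B(k)` and `B(g ∘_B k)` are `B` applied to the same Sweedler
sum, which is the multiplicativity of `B`.

For the second claim we work in the convolution algebra of linear maps `H → H`. As `B` is a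
coalgebra map, `S ∘ B` is a two-sided convolution inverse of `B`. Cocommutativity gives
`g₍₁₎ ∘_B T(g₍₂₎) = ε(g)·1`; applying `B` and multiplicativity shows that `B ∘ T` is a right
convolution inverse of `B`, hence `B ∘ T = S ∘ B`. Multiplicativity applied three times then turns
`B(g₍₁₎ ∘_B B(g₍₂₎) ∘_B k ∘_B T(B(g₍₃₎)))` into `B(g₍₁₎)·B(B(g₍₂₎))·B(k)·S(B(B(g₍₃₎)))`, which
is `B(g) ∘_B B(k)` because `B` is a coalgebra map.
-/

universe u

/-- `r` reindexed by `Fin` in an arbitrary universe: hypotheses quantifying over index types of one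
fixed universe can then be applied to any Sweedler representation. -/
noncomputable def Coalgebra.Repr.ulift {R A : Type*} [CommSemiring R] [AddCommMonoid A]
    [Module R A] [CoalgebraStruct R A] {a : A} {ι : Type*} (r : Coalgebra.Repr R a ι) :
    Coalgebra.Repr R a (ULift.{u} (Fin r.index.card)) where
  index := Finset.univ
  left i := r.left (r.index.equivFin.symm i.down)
  right i := r.right (r.index.equivFin.symm i.down)
  eq := by
    rw [← r.eq, ← Finset.sum_coe_sort r.index]
    exact Fintype.sum_equiv (Equiv.ulift.trans r.index.equivFin.symm) _ _ fun _ => rfl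

lemma Coalgebra.Repr.sum_tmul_map_eq {R A B : Type*} [CommSemiring R] [AddCommMonoid A]
    [Module R A] [CoalgebraStruct R A] [AddCommMonoid B] [Module R B] {a : A} {ι : Type*}
    (r : Coalgebra.Repr R a ι) (f g : A →ₗ[R] B) :
    ∑ i ∈ r.index, f (r.left i) ⊗ₜ[R] g (r.right i)
      = _root_.TensorProduct.map f g (CoalgebraStruct.comul (R := R) a) := by
  simp only [← r.eq, map_sum, _root_.TensorProduct.map_tmul]

namespace HopfMul

variable {R H}

/-- A type synonym for `H` on which `h` is an `Algebra` instance, so that Mathlib's convolution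
algebra `WithConv (H →ₗ[R] h.Alg)` is available. -/
def Alg (_h : HopfMul R H) : Type _ := H

variable (h : HopfMul R H)

instance : AddCommGroup h.Alg := inferInstanceAs (AddCommGroup H)

instance : Module R h.Alg := inferInstanceAs (Module R H)

instance : Semiring h.Alg where
  mul a b := h.mul a b
  one := h.one
  left_distrib a b c := map_add (h.mul a) b c
  right_distrib a b c := LinearMap.map_add₂ h.mul a b c
  zero_mul := LinearMap.map_zero₂ h.mul
  mul_zero a := map_zero (h.mul a)
  mul_assoc := h.mul_assoc
  one_mul := h.one_mul
  mul_one := h.mul_one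

instance : Algebra R h.Alg :=
  Algebra.ofModule (fun r a b => LinearMap.map_smul₂ h.mul r a b)
    (fun r a b => map_smul (h.mul a) r b)

def conv (f : H →ₗ[R] H) : WithConv (H →ₗ[R] h.Alg) := WithConv.toConv f

lemma conv_apply (f : H →ₗ[R] H) (a : H) : h.conv f a = f a := rfl

lemma conv_one_apply (a : H) :
    (1 : WithConv (H →ₗ[R] h.Alg)) a = counit (R := R) a • h.one := by
  rw [LinearMap.convOne_apply, Algebra.algebraMap_eq_smul_one]
  rfl

lemma conv_mul_apply_one (f g : WithConv (H →ₗ[R] h.Alg)) :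
    (f * g) h.one = h.mul (f h.one) (g h.one) := by
  rw [LinearMap.convMul_apply, h.comul_one]
  rfl

lemma conv_id_mul_conv_S : h.conv LinearMap.id * h.conv h.S = 1 := by
  ext a
  rw [(ℛ R a).ulift.convMul_apply, conv_one_apply, ← h.S_mul_right a]
  rfl

lemma conv_S_mul_conv_id : h.conv h.S * h.conv LinearMap.id = 1 := by
  ext a
  rw [(ℛ R a).ulift.convMul_apply, conv_one_apply, ← h.S_mul_left a]
  rfl

lemma conv_comp_coalgHom_eq_one {f g : H →ₗ[R] H} (φ : H →ₗc[R] H)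
    (hfg : h.conv f * h.conv g = 1) : h.conv (f ∘ₗ φ) * h.conv (g ∘ₗ φ) = 1 := by
  have e := LinearMap.convMul_comp_coalgHom_distrib (h.conv f) (h.conv g) φ
  rw [hfg] at e
  ext a
  rw [conv_one_apply, ← CoalgHomClass.counit_comp_apply φ a, ← conv_one_apply]
  exact congr($e a).symm

end HopfMul

namespace RotaBaxter

variable {R H} {h : HopfMul R H} (rb : RotaBaxter R H h)

lemma comul_B_apply (a : H) :
    comul (R := R) (rb.B a) = TensorProduct.map rb.B rb.B (comul (R := R) a) :=
  (rb.comul_B a (ℛ R a).ulift).trans ((ℛ R a).ulift.sum_tmul_map_eq rb.B rb.B)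

def toCoalgHom : H →ₗc[R] H where
  toLinearMap := rb.B
  counit_comp := LinearMap.ext rb.counit_B
  map_comp_comul := LinearMap.ext fun a => (rb.comul_B_apply a).symm

lemma conv_B_mul_conv_S_comp_B : h.conv rb.B * h.conv (h.S ∘ₗ rb.B) = 1 := by
  have e := h.conv_comp_coalgHom_eq_one rb.toCoalgHom h.conv_id_mul_conv_S
  rwa [LinearMap.id_comp] at e

lemma conv_S_comp_B_mul_conv_B : h.conv (h.S ∘ₗ rb.B) * h.conv rb.B = 1 := by
  have e := h.conv_comp_coalgHom_eq_one rb.toCoalgHom h.conv_S_mul_conv_id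
  rwa [LinearMap.id_comp] at e

/-- The descendent product `g ∘_B k = g₍₁₎ B(g₍₂₎) k S(B(g₍₃₎))`. -/
noncomputable def descMul (g k : H) : H :=
  (h.conv LinearMap.id * h.conv rb.B * h.conv (h.mul k ∘ₗ h.S ∘ₗ rb.B)) g

/-- The antipode `T(g) = S(B(g₍₁₎)) S(g₍₂₎) B(g₍₃₎)` of the descendent Hopf algebra. -/
noncomputable def descAntipode : H →ₗ[R] H :=
  (h.conv (h.S ∘ₗ rb.B) * h.conv h.S * h.conv rb.B).ofConv

lemma conv_descAntipode :
    h.conv rb.descAntipode = h.conv (h.S ∘ₗ rb.B) * h.conv h.S * h.conv rb.B :=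
  rfl

lemma descMul_eq_sum (g k : H) {ι : Type*} (r : Coalgebra.Repr R g ι)
    {ι2 : ι → Type*} (r2 : ∀ i : ι, Coalgebra.Repr R (r.right i) (ι2 i)) :
    rb.descMul g k = ∑ i ∈ r.index, ∑ j ∈ (r2 i).index,
      h.mul (h.mul (h.mul (r.left i) (rb.B ((r2 i).left j))) k) (h.S (rb.B ((r2 i).right j))) := by
  rw [descMul, _root_.mul_assoc, r.convMul_apply]
  refine Finset.sum_congr rfl fun i _ => ?_
  rw [(r2 i).convMul_apply, Finset.mul_sum]
  refine Finset.sum_congr rfl fun j _ => ?_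
  simp only [h.mul_assoc]
  rfl

lemma descAntipode_eq_sum (g : H) {ι : Type*} (r : Coalgebra.Repr R g ι)
    {ι2 : ι → Type*} (r2 : ∀ i : ι, Coalgebra.Repr R (r.right i) (ι2 i)) :
    rb.descAntipode g = ∑ i ∈ r.index, ∑ j ∈ (r2 i).index,
      h.mul (h.mul (h.S (rb.B (r.left i))) (h.S ((r2 i).left j))) (rb.B ((r2 i).right j)) := by
  rw [← h.conv_apply, conv_descAntipode, _root_.mul_assoc, r.convMul_apply]
  refine Finset.sum_congr rfl fun i _ => ?_
  rw [(r2 i).convMul_apply, Finset.mul_sum]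
  refine Finset.sum_congr rfl fun j _ => ?_
  simp only [h.mul_assoc]
  rfl

lemma B_descMul (g k : H) : rb.B (rb.descMul g k) = h.mul (rb.B g) (rb.B k) := by
  rw [rb.rb g k (ℛ R g).ulift fun _ => (ℛ R _).ulift]
  simp only [← map_sum]
  exact congrArg rb.B (rb.descMul_eq_sum g k _ _)

lemma B_one : rb.B h.one = h.one := by
  have inv_right : h.mul (rb.B h.one) (h.S (rb.B h.one)) = h.one := by
    have e := congr($(rb.conv_B_mul_conv_S_comp_B) h.one)
    rwa [h.conv_mul_apply_one, h.conv_one_apply, h.counit_one, one_smul] at e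
  have inv_left : h.mul (h.S (rb.B h.one)) (rb.B h.one) = h.one := by
    have e := congr($(rb.conv_S_comp_B_mul_conv_B) h.one)
    rwa [h.conv_mul_apply_one, h.conv_one_apply, h.counit_one, one_smul] at e
  have idem : h.mul (rb.B h.one) (rb.B h.one) = rb.B h.one := by
    rw [← rb.B_descMul, descMul, h.conv_mul_apply_one, h.conv_mul_apply_one]
    simp only [HopfMul.conv_apply, LinearMap.comp_apply, LinearMap.id_apply, h.one_mul, inv_right]
  calc rb.B h.one = h.mul (h.mul (h.S (rb.B h.one)) (rb.B h.one)) (rb.B h.one) := by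
        rw [inv_left, h.one_mul]
    _ = h.one := by rw [h.mul_assoc, idem, inv_left]

lemma conv_B_mul_conv_descAntipode_mul :
    h.conv rb.B * h.conv rb.descAntipode * h.conv (h.S ∘ₗ rb.B) = h.conv h.S := by
  have e : h.conv rb.B * h.conv rb.descAntipode * h.conv (h.S ∘ₗ rb.B)
      = h.conv rb.B * h.conv (h.S ∘ₗ rb.B) * h.conv h.S
          * (h.conv rb.B * h.conv (h.S ∘ₗ rb.B)) := by
    simp only [conv_descAntipode, _root_.mul_assoc]
  rw [e, conv_B_mul_conv_S_comp_B, _root_.one_mul, _root_.mul_one]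

lemma sum_descMul_descAntipode [IsCocomm R H] (a : H) :
    ∑ i ∈ (ℛ R a).index, rb.descMul ((ℛ R a).left i) (rb.descAntipode ((ℛ R a).right i))
      = counit (R := R) a • h.one := by
  set φ := h.conv LinearMap.id * h.conv rb.B
  -- `Ψ (x ⊗ y ⊗ z) = φ(x) T(z) S(B(y))`; cocommutativity lets `y` and `z` trade places.
  set Ψ : H ⊗[R] (H ⊗[R] H) →ₗ[R] h.Alg := LinearMap.mul' R h.Alg ∘ₗ
    TensorProduct.map φ.ofConv (LinearMap.mul' R h.Alg ∘ₗ
      TensorProduct.map (h.conv rb.descAntipode).ofConv (h.conv (h.S ∘ₗ rb.B)).ofConv ∘ₗ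
      (TensorProduct.comm R H H).toLinearMap)
  rw [← h.conv_one_apply, ← h.conv_id_mul_conv_S]
  calc (∑ i ∈ (ℛ R a).index,
        rb.descMul ((ℛ R a).left i) (rb.descAntipode ((ℛ R a).right i)) : h.Alg)
    _ = ∑ i ∈ (ℛ R a).index, ∑ j ∈ (ℛ R ((ℛ R a).left i)).index,
        Ψ ((ℛ R ((ℛ R a).left i)).left j ⊗ₜ
          ((ℛ R ((ℛ R a).left i)).right j ⊗ₜ (ℛ R a).right i)) := by
        refine Finset.sum_congr rfl fun i _ => ?_
        rw [descMul, (ℛ R _).convMul_apply]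
        rfl
    _ = ∑ i ∈ (ℛ R a).index, Ψ ((ℛ R a).left i ⊗ₜ comul (R := R) ((ℛ R a).right i)) := by
        simp only [← map_sum]
        rw [Coalgebra.sum_tmul_tmul_eq (ℛ R a) (fun _ => ℛ R _) (fun _ => ℛ R _)]
        congr 1
        refine Finset.sum_congr rfl fun i _ => ?_
        rw [← (ℛ R _).eq, TensorProduct.tmul_sum]
    _ = (φ * (h.conv rb.descAntipode * h.conv (h.S ∘ₗ rb.B))) a := by
        rw [(ℛ R a).convMul_apply]
        refine Finset.sum_congr rfl fun i _ => ?_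
        simp only [Ψ, LinearMap.comp_apply, _root_.TensorProduct.map_tmul, LinearMap.mul'_apply,
          LinearEquiv.coe_coe, Coalgebra.comm_comul, LinearMap.convMul_apply]
    _ = (h.conv LinearMap.id * h.conv h.S) a := by
        rw [← rb.conv_B_mul_conv_descAntipode_mul]
        simp only [φ, _root_.mul_assoc]

lemma conv_B_mul_conv_B_comp_descAntipode [IsCocomm R H] :
    h.conv rb.B * h.conv (rb.B ∘ₗ rb.descAntipode) = 1 := by
  ext a
  rw [(ℛ R a).convMul_apply, h.conv_one_apply, ← rb.B_one, ← map_smul,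
    ← rb.sum_descMul_descAntipode, map_sum]
  exact Finset.sum_congr rfl fun i _ => (rb.B_descMul _ _).symm

lemma B_comp_descAntipode [IsCocomm R H] : rb.B ∘ₗ rb.descAntipode = h.S ∘ₗ rb.B :=
  congrArg WithConv.ofConv (left_inv_eq_right_inv rb.conv_S_comp_B_mul_conv_B
    rb.conv_B_mul_conv_B_comp_descAntipode).symm

lemma B_descAntipode [IsCocomm R H] (g : H) : rb.B (rb.descAntipode g) = h.S (rb.B g) :=
  LinearMap.congr_fun rb.B_comp_descAntipode g

end RotaBaxter

/-- For a cocommutative Rota-Baxter Hopf algebra: `B(g ∘_B h) = B(g)·B(h)`, and `B` is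
again a Rota-Baxter operator on the descendent Hopf algebra `H_B = (H, ∘_B, T)`. -/
theorem rotaBaxter_B_multiplicative (h : HopfMul R H) (hc : Cocomm R H)
    (rb : RotaBaxter R H h) (circB : H → H → H) (T : H → H)
    (hcirc : ∀ (g k : H) {ι : Type*} (r : Coalgebra.Repr R g ι)
        {ι2 : ι → Type*} (r2 : ∀ i : ι, Coalgebra.Repr R (r.right i) (ι2 i)),
      circB g k = ∑ i ∈ r.index, ∑ j ∈ (r2 i).index,
        h.mul (h.mul (h.mul (r.left i) (rb.B ((r2 i).left j))) k)
          (h.S (rb.B ((r2 i).right j))))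
    (hT : ∀ (g : H) {ι : Type*} (r : Coalgebra.Repr R g ι)
        {ι2 : ι → Type*} (r2 : ∀ i : ι, Coalgebra.Repr R (r.right i) (ι2 i)),
      T g = ∑ i ∈ r.index, ∑ j ∈ (r2 i).index,
        h.mul (h.mul (h.S (rb.B (r.left i))) (h.S ((r2 i).left j)))
          (rb.B ((r2 i).right j))) :
    (∀ g k : H, rb.B (circB g k) = h.mul (rb.B g) (rb.B k)) ∧
    (∀ (g k : H) {ι : Type*} (r : Coalgebra.Repr R g ι)
        {ι2 : ι → Type*} (r2 : ∀ i : ι, Coalgebra.Repr R (r.right i) (ι2 i)),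
      circB (rb.B g) (rb.B k) = ∑ i ∈ r.index, ∑ j ∈ (r2 i).index,
        rb.B (circB (circB (circB (r.left i) (rb.B ((r2 i).left j))) k)
          (T (rb.B ((r2 i).right j))))) := by
  obtain rfl : circB = rb.descMul := funext₂ fun g k =>
    (hcirc g k (ℛ R g).ulift fun _ => (ℛ R _).ulift).trans (rb.descMul_eq_sum g k _ _).symm
  obtain rfl : T = rb.descAntipode := funext fun g =>
    (hT g (ℛ R g).ulift fun _ => (ℛ R _).ulift).trans (rb.descAntipode_eq_sum g _ _).symm
  have : IsCocomm R H := ⟨LinearMap.ext hc⟩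
  refine ⟨rb.B_descMul, fun g k _ r _ r2 => ?_⟩
  rw [rb.descMul_eq_sum (rb.B g) (rb.B k) (r.induced rb.toCoalgHom)
    fun i => (r2 i).induced rb.toCoalgHom]
  simp only [rb.B_descMul, rb.B_descAntipode]
  rfl
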